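/- Let 0 ≤ s ≤ r, λ ∈ Â_{r-s}, ν ∈ Â_r, let t ∈ Std_r(ν) with t(r-s) = λ, and let a ∈ A_{r-s}. Write u_{t_{[0,r-s]}}·a = Σ_{s'∈Std_{r-s}(λ)} r(a;t_{[0,r-s]},s') u_{s'} + Σ_{σ▷λ, p,q∈Std_{r-s}(σ)} r(a;t_{[0,r-s]},p,q) d_p* u_q in A_{r-s}. Suppose that u_t·a ≡ Σ_{s'∈Std_{r-s}(λ)} r(a;t_{[0,r-s]},s') u_{t_{[r-s,r]}} u_{s'} + Σ_{z∈Std_r(ν), z_{[r-s,r]} ▷ t_{[r-s,r]}} r_z u_z modulo A_r^{▷ν}, where the coefficients r(a;t_{[0,r-s]},s') are exactly those of the first expansion. Then the rightmost sum satisfies Σ_{z∈Std_r(ν), z_{[r-s,r]} ▷ t_{[r-s,r]}} r_z u_z ≡ Σ_{σ▷λ, p,q∈Std_{r-s}(σ)} r(a;t_{[0,r-s]},p,q) u_{t_{[r-s,r]}} d_p* u_q modulo A_r^{▷ν}. -/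
import Mathlib


open scoped BigOperators TensorProduct Classical

section Paths

variable (Λ : ℕ → Type) (E : ∀ n, Λ n → Λ (n + 1) → Prop)

/-- A path in the branching graph from level `a` to level `b`, recorded by its
vertices at the levels `a ≤ k ≤ b`, successive vertices being joined by an edge.
For `a = 0` these are the standard tableaux-paths; for `a = r - s` the skew ones. -/
def PathSpace (a b : ℕ) : Type :=
  {f : (k : ℕ) → a ≤ k → k ≤ b → Λ k //
    ∀ (k : ℕ) (h1 : a ≤ k) (h2 : k + 1 ≤ b),
      E k (f k h1 (Nat.le_of_succ_le h2)) (f (k + 1) (h1.trans (Nat.le_succ k)) h2)}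

variable {Λ E}

/-- the vertex of the path at level `k`. -/
def PathSpace.vert {a b : ℕ} (t : PathSpace Λ E a b) (k : ℕ)
    (h1 : a ≤ k) (h2 : k ≤ b) : Λ k := t.1 k h1 h2

/-- the subpath `t_{[c,b]}`. -/
def PathSpace.upper {a b : ℕ} (t : PathSpace Λ E a b) (c : ℕ) (hac : a ≤ c) :
    PathSpace Λ E c b :=
  ⟨fun k hk1 hk2 => t.1 k (hac.trans hk1) hk2, fun k h1 h2 => t.2 k (hac.trans h1) h2⟩

/-- the subpath `t_{[a,c]}`. -/
def PathSpace.lower {a b : ℕ} (t : PathSpace Λ E a b) (c : ℕ) (hcb : c ≤ b) :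
    PathSpace Λ E a c :=
  ⟨fun k h1 h2 => t.1 k h1 (h2.trans hcb), fun k h1 h2 => t.2 k h1 (h2.trans hcb)⟩

variable [∀ n, PartialOrder (Λ n)]

/-- `DomOn c s t` : the subpath `s_{[c,b]}` dominates `t_{[c,b]}`, i.e.
`t(k) ⊴ s(k)` in `Â_k` for all levels `c ≤ k ≤ b`. -/
def PathSpace.DomOn {a b : ℕ} (c : ℕ) (s t : PathSpace Λ E a b) : Prop :=
  ∀ (k : ℕ) (h1 : a ≤ k) (h2 : k ≤ b), c ≤ k → t.vert k h1 h2 ≤ s.vert k h1 h2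

/-- `StrictDomOn c s t` : the subpath `s_{[c,b]}` strictly dominates `t_{[c,b]}`. -/
def PathSpace.StrictDomOn {a b : ℕ} (c : ℕ) (s t : PathSpace Λ E a b) : Prop :=
  PathSpace.DomOn c s t ∧
    ∃ (k : ℕ) (h1 : a ≤ k) (h2 : k ≤ b), c ≤ k ∧ s.vert k h1 h2 ≠ t.vert k h1 h2

end Paths

section Std

variable (Λ : ℕ → Type) (E : ∀ n, Λ n → Λ (n + 1) → Prop)

/-- `Std_r(ν)` : the standard tableaux of shape `ν ∈ Â_r`, i.e. paths in the
branching graph from level `0` to the vertex `ν` at level `r`. -/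
abbrev FullStd (r : ℕ) (ν : Λ r) : Type :=
  {t : PathSpace Λ E 0 r // t.vert r (Nat.zero_le r) le_rfl = ν}

/-- `Std_s(ν∖λ)` : the skew standard tableaux of shape `ν∖λ`, i.e. paths in the
branching graph from `λ ∈ Â_a` to `ν ∈ Â_r` (where `a = r - s`). -/
abbrev SkewStd (a r : ℕ) (har : a ≤ r) (lam : Λ a) (ν : Λ r) : Type :=
  {t : PathSpace Λ E a r // t.vert a le_rfl har = lam ∧ t.vert r har le_rfl = ν}

end Std

/-- technical lemma on the rightmost term.
Let `0 ≤ s ≤ r`, `λ ∈ Â_{r-s}`, `ν ∈ Â_r`, `t ∈ Std_r(ν)` with `t(r-s) = λ`, `a ∈ A_{r-s}`.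
Write `u_{t_{[0,r-s]}}·a = Σ_{s'} r(a;t_{[0,r-s]},s') u_{s'} +
Σ_{σ▷λ, p,q∈Std_{r-s}(σ)} r(a;t_{[0,r-s]},p,q) d_p* u_q` in `A_{r-s}`.
Suppose `u_t·a ≡ Σ_{s'} r(a;t_{[0,r-s]},s') u_{t_{[r-s,r]}} u_{s'} + Σ_z r_z u_z`
modulo `A_r^{▷ν}`, with the sum over `z ∈ Std_r(ν)` with `z_{[r-s,r]} ▷ t_{[r-s,r]}`.
Then `Σ_z r_z u_z ≡ Σ_{σ▷λ, p,q} r(a;t_{[0,r-s]},p,q) u_{t_{[r-s,r]}} d_p* u_q`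
modulo `A_r^{▷ν}`. -/
theorem rightmost_term_lemma
    {R : Type} [CommRing R] [IsDomain R]
    {Λ : ℕ → Type} [∀ n, PartialOrder (Λ n)] [∀ n, Fintype (Λ n)]
    {E : ∀ n, Λ n → Λ (n + 1) → Prop}
    [∀ a b : ℕ, Fintype (PathSpace Λ E a b)]
    (A : ℕ → Type) [∀ n, Ring (A n)] [∀ n, Algebra R (A n)]
    (incl : ∀ a b : ℕ, a ≤ b → (A a →ₐ[R] A b))
    (uu : ∀ a b : ℕ, PathSpace Λ E a b → A b)
    (dstar : ∀ r : ℕ, PathSpace Λ E 0 r → A r)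
    (J : ∀ r : ℕ, Λ r → Submodule R (A r))
    -- contextual axioms
    (hJideal : ∀ (k : ℕ) (μ : Λ k) (x : A k), x ∈ J k μ → ∀ y : A k, x * y ∈ J k μ)
    (hfact : ∀ (a b : ℕ) (h : a ≤ b) (t : PathSpace Λ E 0 b),
      uu 0 b t = uu a b (t.upper a (Nat.zero_le a)) * incl a b h (uu 0 a (t.lower a h)))
    -- the setting
    (r s : ℕ) (hs : s ≤ r) (lam : Λ (r - s)) (ν : Λ r)
    (t : FullStd Λ E r ν)
    (ht : (t : PathSpace Λ E 0 r).vert (r - s) (Nat.zero_le _) (Nat.sub_le r s) = lam)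
    (a : A (r - s))
    (rc : FullStd Λ E (r - s) lam → R)
    (rc2 : (σ : {σ : Λ (r - s) // lam < σ}) →
      FullStd Λ E (r - s) σ.1 → FullStd Λ E (r - s) σ.1 → R)
    -- the expansion of `u_{t_{[0,r-s]}}·a` in the cellular basis of `A_{r-s}`
    (hexp : uu 0 (r - s) ((t : PathSpace Λ E 0 r).lower (r - s) (Nat.sub_le r s)) * a =
      (∑ p : FullStd Λ E (r - s) lam, rc p • uu 0 (r - s) (p : PathSpace Λ E 0 (r - s))) +
      ∑ σ : {σ : Λ (r - s) // lam < σ}, ∑ p : FullStd Λ E (r - s) σ.1,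
        ∑ q : FullStd Λ E (r - s) σ.1, rc2 σ p q •
          (dstar (r - s) (p : PathSpace Λ E 0 (r - s)) *
            uu 0 (r - s) (q : PathSpace Λ E 0 (r - s))))
    -- the assumed expansion of `u_t·a` modulo `A_r^{▷ν}`
    (S : Finset (FullStd Λ E r ν)) (rz : FullStd Λ E r ν → R)
    (hS : ∀ z ∈ S, PathSpace.StrictDomOn (r - s)
      (z : PathSpace Λ E 0 r) (t : PathSpace Λ E 0 r))
    (hsupp : uu 0 r (t : PathSpace Λ E 0 r) * incl (r - s) r (Nat.sub_le r s) a -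
        (∑ p : FullStd Λ E (r - s) lam, rc p •
          (uu (r - s) r ((t : PathSpace Λ E 0 r).upper (r - s) (Nat.zero_le _)) *
            incl (r - s) r (Nat.sub_le r s) (uu 0 (r - s) (p : PathSpace Λ E 0 (r - s))))) -
        (∑ z ∈ S, rz z • uu 0 r (z : PathSpace Λ E 0 r)) ∈ J r ν) :
    (∑ z ∈ S, rz z • uu 0 r (z : PathSpace Λ E 0 r)) -
      (∑ σ : {σ : Λ (r - s) // lam < σ}, ∑ p : FullStd Λ E (r - s) σ.1,
        ∑ q : FullStd Λ E (r - s) σ.1, rc2 σ p q •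
          (uu (r - s) r ((t : PathSpace Λ E 0 r).upper (r - s) (Nat.zero_le _)) *
            incl (r - s) r (Nat.sub_le r s)
              (dstar (r - s) (p : PathSpace Λ E 0 (r - s)) *
                uu 0 (r - s) (q : PathSpace Λ E 0 (r - s))))) ∈ J r ν := by
  have key : uu 0 r (t : PathSpace Λ E 0 r) * incl (r - s) r (Nat.sub_le r s) a -
      (∑ p : FullStd Λ E (r - s) lam, rc p •
        (uu (r - s) r ((t : PathSpace Λ E 0 r).upper (r - s) (Nat.zero_le _)) *
          incl (r - s) r (Nat.sub_le r s) (uu 0 (r - s) (p : PathSpace Λ E 0 (r - s))))) =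
      ∑ σ : {σ : Λ (r - s) // lam < σ}, ∑ p : FullStd Λ E (r - s) σ.1,
        ∑ q : FullStd Λ E (r - s) σ.1, rc2 σ p q •
          (uu (r - s) r ((t : PathSpace Λ E 0 r).upper (r - s) (Nat.zero_le _)) *
            incl (r - s) r (Nat.sub_le r s)
              (dstar (r - s) (p : PathSpace Λ E 0 (r - s)) *
                uu 0 (r - s) (q : PathSpace Λ E 0 (r - s)))) := by
    rw [hfact (r - s) r (Nat.sub_le r s) (t : PathSpace Λ E 0 r), mul_assoc, ← map_mul, hexp]
    simp only [map_add, map_sum, map_smul, mul_add, Finset.mul_sum, mul_smul_comm]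
    exact add_sub_cancel_left _ _
  have h := Submodule.neg_mem (J r ν) hsupp
  rwa [key, neg_sub] at h
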